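/- arXiv:1806.11506 — 3 statements merged into one kernel-verified Lean document; each statement's English description precedes it below -/
import Mathlib

section
/- Uniformly exciting noise on non-bipartite graphs: let a_{ij} ∈ ℝ for i ≠ j in {1,…,N} satisfy the sign-symmetry condition sgn(a_{ij}) = sgn(a_{ji}) for all i ≠ j, and let x ∈ ℝ^N with x_i > 0 for all i. Define a graph on {1,…,N} with an edge between i ≠ j iff a_{ij} ≠ 0. Suppose this graph is connected and non-bipartite (it contains a cycle of odd length). If v ∈ ℝ^N satisfies v_i x_i a_{ij} + v_j x_j a_{ji} = 0 for all i ≠ j, then v = 0. -/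
/-- uniformly exciting noise on non-bipartite graphs.  Let `a i j`
(`i ≠ j`) satisfy the sign-symmetry condition `sgn(a i j) = sgn(a j i)`, let
`x` be coordinatewise positive, and consider the graph on `{1,…,N}` with an edge
between `i ≠ j` iff `a i j ≠ 0`.  If this graph is connected and contains an odd
closed cycle, and `v` satisfies `v_i x_i a_{ij} + v_j x_j a_{ji} = 0` for all
`i ≠ j`, then `v = 0`. -/
theorem nonbipartite_noise_nondegenerate {N : ℕ} (a : Fin N → Fin N → ℝ)
    (hsym : ∀ i j, i ≠ j → Real.sign (a i j) = Real.sign (a j i))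
    (x : Fin N → ℝ) (hx : ∀ i, 0 < x i)
    (hconn : ∀ i j : Fin N, Relation.ReflTransGen (fun k l => k ≠ l ∧ a k l ≠ 0) i j)
    (hodd : ∃ (m : ℕ) (c : ℕ → Fin N), Odd m ∧ c m = c 0 ∧
        ∀ k < m, c k ≠ c (k + 1) ∧ a (c k) (c (k + 1)) ≠ 0)
    (v : Fin N → ℝ)
    (hv : ∀ i j, i ≠ j → v i * x i * a i j + v j * x j * a j i = 0) :
    v = 0 := by
  set w : Fin N → ℝ := fun i => v i * x i with hw
  have hedge : ∀ i j, i ≠ j → a i j ≠ 0 →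
      (w i = 0 → w j = 0) ∧ (w i ≠ 0 → w i * w j < 0) := by
    intro i j hij ha
    have haji : a j i ≠ 0 := by
      intro h
      have hs := hsym i j hij
      rw [h, Real.sign_zero] at hs
      exact ha (Real.sign_eq_zero_iff.mp hs)
    have hpos : 0 < a i j * a j i := by
      rcases lt_trichotomy (a i j) 0 with h | h | h
      · have hs := hsym i j hij
        rw [Real.sign_of_neg h] at hs
        have h2 : a j i < 0 := by
          rcases lt_trichotomy (a j i) 0 with h3 | h3 | h3
          · exact h3
          · exact absurd h3 haji
          · rw [Real.sign_of_pos h3] at hs; norm_num at hs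
        exact mul_pos_of_neg_of_neg h h2
      · exact absurd h ha
      · have hs := hsym i j hij
        rw [Real.sign_of_pos h] at hs
        have h2 : 0 < a j i := by
          rcases lt_trichotomy (a j i) 0 with h3 | h3 | h3
          · rw [Real.sign_of_neg h3] at hs; norm_num at hs
          · exact absurd h3 haji
          · exact h3
        exact mul_pos h h2
    have heq : w i * a i j + w j * a j i = 0 := hv i j hij
    constructor
    · intro hwi
      rw [hwi, zero_mul, zero_add, mul_eq_zero] at heq
      exact heq.resolve_right haji
    · intro hwi
      have hwj : w j ≠ 0 := by
        intro hwj
        rw [hwj, zero_mul, add_zero, mul_eq_zero] at heq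
        exact hwi (heq.resolve_right ha)
      have h2 : 0 < (w j * a j i) ^ 2 := by
        have := mul_ne_zero hwj haji
        positivity
      nlinarith [h2, sq_nonneg (w i * a i j), hpos, heq]
  by_cases h0 : ∃ i, w i = 0
  · obtain ⟨i0, hi0⟩ := h0
    have hall : ∀ j, w j = 0 := by
      intro j
      induction hconn i0 j with
      | refl => exact hi0
      | tail _ hstep ih => exact (hedge _ _ hstep.1 hstep.2).1 ih
    funext i
    have hwi := hall i
    have : v i * x i = 0 := hwi
    have := (mul_eq_zero.mp this).resolve_right (hx i).ne'
    simpa using this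
  · push_neg at h0
    obtain ⟨m, c, hm, hc, hcyc⟩ := hodd
    have claim : ∀ k, k ≤ m → 0 < w (c 0) * w (c k) * (-1 : ℝ) ^ k := by
      intro k
      induction k with
      | zero =>
        intro _
        simpa using mul_self_pos.mpr (h0 (c 0))
      | succ k ih =>
        intro hk1
        have hk : k < m := Nat.lt_of_succ_le hk1
        have IH := ih hk.le
        obtain ⟨hne, ha⟩ := hcyc k hk
        have hE := (hedge _ _ hne ha).2 (h0 _)
        rw [pow_succ]
        nlinarith [sq_nonneg (w (c k)), IH, hE, sq_nonneg (w (c 0) * w (c (k+1)))]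
    have hfin := claim m le_rfl
    rw [hc, Odd.neg_one_pow hm] at hfin
    nlinarith [mul_self_nonneg (w (c 0))]
end

section
/- A locally ordinal potential is a strict Lyapunov function for the best-response dynamics: assume the game is an LOPG with continuously differentiable potential P and satisfies Hypothesis 1, and write BR_i(x_{−i}) = M_i(x_{−i}). Then for every x ∈ ℝ_+^N which is not a Nash equilibrium (equivalently, x_i ≠ BR_i(x_{−i}) for some i), one has ⟨∇P(x), −x + BR(x)⟩ = Σ_i ∂P/∂x_i(x) · (BR_i(x_{−i}) − x_i) > 0, while each summand is nonnegative at every x ∈ ℝ_+^N. -/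
/-- Partial derivative of `f : ℝ^N → ℝ` with respect to coordinate `j` at `x`. -/
noncomputable def pd {N : ℕ} (f : (Fin N → ℝ) → ℝ) (j : Fin N) (x : Fin N → ℝ) : ℝ :=
  deriv (fun t => f (Function.update x j t)) (x j)

private lemma sign_one_pos {y : ℝ} (h : Real.sign y = 1) : 0 < y := by
  rcases lt_trichotomy y 0 with hy | hy | hy
  · rw [Real.sign_of_neg hy] at h; norm_num at h
  · rw [hy, Real.sign_zero] at h; norm_num at h
  · exact hy

private lemma sign_neg_one_neg {y : ℝ} (h : Real.sign y = -1) : y < 0 := by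
  rcases lt_trichotomy y 0 with hy | hy | hy
  · exact hy
  · rw [hy, Real.sign_zero] at h; norm_num at h
  · rw [Real.sign_of_pos hy] at h; norm_num at h

/-- a locally ordinal potential is a strict Lyapunov function for the
best-response dynamics.  Under Hypothesis 1 (strong single-peakedness with peak/best
response `M i`), if `P` is a continuously differentiable potential with
`sgn(∂u_i/∂x_i) = sgn(∂P/∂x_i)` on `ℝ_+^N`, then each summand
`∂P/∂x_i(x)·(BR_i(x_{−i}) − x_i)` is nonnegative on `ℝ_+^N`, and
`⟨∇P(x), −x + BR(x)⟩ > 0` whenever `x` is not a Nash equilibrium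
(i.e. `x_i ≠ BR_i(x_{−i})` for some `i`). -/
theorem potential_strict_lyapunov_BR {N : ℕ} (u : Fin N → (Fin N → ℝ) → ℝ)
    (hu : ∀ i, ContDiff ℝ 1 (u i))
    (P : (Fin N → ℝ) → ℝ) (hP : ContDiff ℝ 1 P)
    (hsgn : ∀ i (x : Fin N → ℝ), (∀ j, 0 ≤ x j) →
        Real.sign (pd (u i) i x) = Real.sign (pd P i x))
    (M : Fin N → (Fin N → ℝ) → ℝ)
    (hMdep : ∀ i (x y : Fin N → ℝ), (∀ j, j ≠ i → x j = y j) → M i x = M i y)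
    (hM : ∀ i (x : Fin N → ℝ), (∀ j, 0 ≤ x j) →
        0 ≤ M i x ∧ (x i < M i x → 0 < pd (u i) i x) ∧ (M i x < x i → pd (u i) i x < 0)) :
    ∀ x : Fin N → ℝ, (∀ j, 0 ≤ x j) →
      (∀ i, 0 ≤ pd P i x * (M i x - x i)) ∧
      ((∃ i, x i ≠ M i x) → 0 < ∑ i, pd P i x * (M i x - x i)) := by

  intro x hx
  have key : ∀ i, x i ≠ M i x → 0 < pd P i x * (M i x - x i) := by
    intro i hne
    rcases lt_or_gt_of_ne hne with h | h
    · have hu' := (hM i x hx).2.1 h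
      have : 0 < pd P i x := by
        have := hsgn i x hx
        rw [Real.sign_of_pos hu'] at this
        exact sign_one_pos this.symm
      exact mul_pos this (by linarith)
    · have hu' := (hM i x hx).2.2 h
      have : pd P i x < 0 := by
        have := hsgn i x hx
        rw [Real.sign_of_neg hu'] at this
        exact sign_neg_one_neg this.symm
      exact mul_pos_of_neg_of_neg this (by linarith)
  have nonneg : ∀ i, 0 ≤ pd P i x * (M i x - x i) := by
    intro i
    by_cases h : x i = M i x
    · simp [h]
    · exact (key i h).le
  refine ⟨nonneg, ?_⟩
  rintro ⟨i, hi⟩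
  exact Finset.sum_pos' (fun j _ => nonneg j) ⟨i, Finset.mem_univ i, key i hi⟩
end

section
/- Strictly concave-convex games satisfy Rosen's negative-definiteness condition: fix x ∈ ℝ^N and C² payoff functions u_1, …, u_N : ℝ^N → ℝ. Suppose (a) ∂²u_i/∂x_i²(x) < 0 for every i; (b) for every k, the (N−1)×(N−1) matrix (∂²u_k/∂x_i∂x_j(x))_{i≠k, j≠k} is positive semidefinite; and (c) the N×N matrix C with C_{ij} = Σ_{k=1}^N ∂²u_k/∂x_i∂x_j(x) is negative semidefinite. Let G be the N×N matrix with G_{ij} = ∂²u_i/∂x_i∂x_j(x). Then G + Gᵀ = A − Σ_k B^k + C, where A is the diagonal matrix with A_{ii} = ∂²u_i/∂x_i²(x) and B^k is the matrix with B^k_{ij} = ∂²u_k/∂x_i∂x_j(x) if i ≠ k and j ≠ k and B^k_{ij} = 0 otherwise; consequently G + Gᵀ is negative definite. -/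
/-!
By Schwarz's theorem each Hessian `∂ᵢ∂ⱼuₖ(x)` is symmetric, so `(G + Gᵀ)ᵢⱼ = ∂ᵢ∂ⱼuᵢ + ∂ᵢ∂ⱼuⱼ`.
Removing from `Cᵢⱼ = Σₖ ∂ᵢ∂ⱼuₖ` the entries `Bᵏᵢⱼ` leaves exactly the terms with `k ∈ {i, j}`,
which is `G + Gᵀ` except that the term `k = i = j` is counted once instead of twice; the
diagonal `A` supplies it. The quadratic form of `A - Σₖ Bᵏ + C` is then a negative definite
diagonal form plus two negative semidefinite ones.
-/

open Matrix

/-- Second partial derivative `∂²f/∂x_i∂x_j`. -/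
noncomputable def pd2 {N : ℕ} (f : (Fin N → ℝ) → ℝ) (i j : Fin N) (x : Fin N → ℝ) : ℝ :=
  pd (pd f j) i x

section PartialDerivatives

variable {N : ℕ} {f : (Fin N → ℝ) → ℝ}

lemma pd_eq_fderiv {x : Fin N → ℝ} (hf : DifferentiableAt ℝ f x) (j : Fin N) :
    pd f j x = fderiv ℝ f x (Pi.single j 1) := by
  have hf' : HasFDerivAt f (fderiv ℝ f x) (Function.update x j (x j)) := by
    rw [Function.update_eq_self]
    exact hf.hasFDerivAt
  exact (hf'.comp_hasDerivAt (x j) (hasDerivAt_update x j (x j))).deriv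

lemma pd2_eq_fderiv_fderiv (hf : Differentiable ℝ f) {x : Fin N → ℝ}
    (hf' : DifferentiableAt ℝ (fderiv ℝ f) x) (i j : Fin N) :
    pd2 f i j x = fderiv ℝ (fderiv ℝ f) x (Pi.single i 1) (Pi.single j 1) := by
  have hpd : pd f j = fun y => fderiv ℝ f y (Pi.single j 1) :=
    funext fun y => pd_eq_fderiv (hf y) j
  rw [pd2, hpd, pd_eq_fderiv (hf'.clm_apply (differentiableAt_const _)),
    fderiv_clm_apply hf' (differentiableAt_const _)]
  simp

theorem pd2_comm (hf : ContDiff ℝ 2 f) (x : Fin N → ℝ) (i j : Fin N) :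
    pd2 f i j x = pd2 f j i x := by
  have hf' : Differentiable ℝ (fderiv ℝ f) :=
    (hf.fderiv_right le_rfl).differentiable one_ne_zero
  rw [pd2_eq_fderiv_fderiv (hf.differentiable two_ne_zero) (hf' x),
    pd2_eq_fderiv_fderiv (hf.differentiable two_ne_zero) (hf' x)]
  exact hf.contDiffAt.isSymmSndFDerivAt (by simp) _ _

end PartialDerivatives

section Decomposition

variable {ι R : Type*} [Fintype ι] [DecidableEq ι]

lemma Finset.sum_ite_eq_or [AddCommGroup R] (f : ι → R) (i j : ι) :
    ∑ k, (if k = i ∨ k = j then f k else 0) = f i + f j - if i = j then f i else 0 := by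
  rcases eq_or_ne i j with rfl | hij
  · simp
  · rw [← Finset.sum_filter, if_neg hij, sub_zero, ← Finset.sum_pair hij]
    congr 1
    ext k
    simp

theorem add_transpose_eq_diagonal_sub_sum_add [AddCommGroup R] (H : ι → Matrix ι ι R)
    (hH : ∀ k i j, H k i j = H k j i) (G A C : Matrix ι ι R) (B : ι → Matrix ι ι R)
    (hG : ∀ i j, G i j = H i j i)
    (hA : ∀ i j, A i j = if i = j then H i i i else 0)
    (hB : ∀ k i j, B k i j = if i ≠ k ∧ j ≠ k then H k i j else 0)
    (hC : ∀ i j, C i j = ∑ k, H k i j) :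
    G + Gᵀ = A - ∑ k, B k + C := by
  ext i j
  have hmask : ∀ k, H k i j - B k i j = if k = i ∨ k = j then H k i j else 0 := by
    intro k
    rw [hB]
    grind
  have hsum : C i j - ∑ k, B k i j = H i i j + H j i j - if i = j then H i i j else 0 := by
    rw [hC, ← Finset.sum_sub_distrib, Finset.sum_congr rfl fun k _ => hmask k,
      Finset.sum_ite_eq_or]
  simp only [Matrix.add_apply, Matrix.sub_apply, transpose_apply, Matrix.sum_apply, hG, hA,
    hH i j i]
  rw [sub_add_eq_add_sub, add_sub_assoc, hsum]
  split_ifs with hij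
  · subst hij; abel
  · abel

end Decomposition

section QuadraticForms

variable {ι R : Type*} [Fintype ι] [DecidableEq ι]

lemma sum_sum_mul_mul_eq_toLinearMap₂' [CommSemiring R] (M : Matrix ι ι R) (v w : ι → R) :
    ∑ i, ∑ j, v i * M i j * w j = M.toLinearMap₂' R v w := by
  simp only [toLinearMap₂'_apply, smul_eq_mul]
  exact Finset.sum_congr rfl fun _ _ => Finset.sum_congr rfl fun _ _ => by ring

lemma sum_sum_mul_diagonal_mul_neg [CommRing R] [LinearOrder R]
    [IsStrictOrderedRing R] {d : ι → R} (hd : ∀ i, d i < 0) {v : ι → R} (hv : v ≠ 0) :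
    ∑ i, ∑ j, v i * diagonal d i j * v j < 0 := by
  obtain ⟨i₀, hi₀⟩ := Function.ne_iff.mp hv
  simp only [diagonal_apply, mul_ite, ite_mul, mul_zero, zero_mul, Finset.sum_ite_eq,
    Finset.mem_univ, if_true]
  refine Finset.sum_neg' (fun i _ => ?_) ⟨i₀, Finset.mem_univ _, ?_⟩
  · nlinarith [mul_self_nonneg (v i), hd i]
  · nlinarith [mul_self_pos.mpr hi₀, hd i₀]

end QuadraticForms

/-- strictly concave-convex games satisfy Rosen's
negative-definiteness condition.  With `G i j = ∂²u_i/∂x_i∂x_j(x)`,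
`A` diagonal with `A i i = ∂²u_i/∂x_i²(x)`, `B^k i j = ∂²u_k/∂x_i∂x_j(x)` for
`i ≠ k`, `j ≠ k` (else `0`), and `C i j = Σ_k ∂²u_k/∂x_i∂x_j(x)`: if
(a) `A i i < 0` for all `i`, (b) each `B^k` is positive semidefinite, and
(c) `C` is negative semidefinite, then `G + Gᵀ = A − Σ_k B^k + C` and `G + Gᵀ`
is negative definite. -/
theorem rosen_condition_concave_convex {N : ℕ} (u : Fin N → (Fin N → ℝ) → ℝ)
    (hu : ∀ i, ContDiff ℝ 2 (u i)) (x : Fin N → ℝ)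
    (G A C : Matrix (Fin N) (Fin N) ℝ) (B : Fin N → Matrix (Fin N) (Fin N) ℝ)
    (hG : ∀ i j, G i j = pd2 (u i) j i x)
    (hA : ∀ i j, A i j = if i = j then pd2 (u i) i i x else 0)
    (hB : ∀ k i j, B k i j = if i ≠ k ∧ j ≠ k then pd2 (u k) i j x else 0)
    (hC : ∀ i j, C i j = ∑ k, pd2 (u k) i j x)
    (ha : ∀ i, pd2 (u i) i i x < 0)
    (hb : ∀ k, ∀ v : Fin N → ℝ, 0 ≤ ∑ i, ∑ j, v i * B k i j * v j)
    (hc : ∀ v : Fin N → ℝ, ∑ i, ∑ j, v i * C i j * v j ≤ 0) :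
    (G + Gᵀ = A - (∑ k, B k) + C) ∧
    (∀ v : Fin N → ℝ, v ≠ 0 → ∑ i, ∑ j, v i * (G + Gᵀ) i j * v j < 0) := by
  have hdecomp : G + Gᵀ = A - ∑ k, B k + C :=
    add_transpose_eq_diagonal_sub_sum_add (fun k i j => pd2 (u k) i j x)
      (fun k => pd2_comm (hu k) x) G A C B hG hA hB hC
  have hdiag : A = diagonal fun i => pd2 (u i) i i x := by
    ext i j
    rw [hA, diagonal_apply]
  refine ⟨hdecomp, fun v hv => ?_⟩
  have hQA := sum_sum_mul_diagonal_mul_neg ha hv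
  have hQB := Finset.sum_nonneg fun k (_ : k ∈ Finset.univ) => hb k v
  have hQC := hc v
  rw [← hdiag] at hQA
  simp only [sum_sum_mul_mul_eq_toLinearMap₂'] at hQA hQB hQC ⊢
  simp only [hdecomp, map_add, map_sub, map_sum, LinearMap.add_apply, LinearMap.sub_apply,
    LinearMap.coe_sum, Finset.sum_apply]
  linarith
end
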